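/- Let T be a dual large semistandard decomposition tableau (for q(n)). Then there is a unique dual marginally large tableau T_M obtainable from T by successively pushing out trivial columns, i.e., the rewriting process of removing trivial columns is confluent and terminates at a unique normal form. -/

import Mathlib

/-!
Pushing out a trivial column only shortens leading runs, so for every row `k` the part of the
row after its leading run of the letter `n - k` (`runTail n T k`) is invariant. In a dual
marginally large tableau the leading run of row `k` has length `|row (k + 1)| + 1`, so such a
tableau is determined, from the bottom row up, by these run tails: this gives uniqueness.
For existence, if some row `k` has excess at least two, pushing out the trivial column of
height `k + 1` keeps the tableau dual large and removes boxes, so the process terminates.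
-/

/-- A hook word: weakly decreasing then strictly increasing. -/
def IsHookWord (w : List ℕ) : Prop :=
  ∃ a b : List ℕ, w = a ++ b ∧ a ≠ [] ∧
    List.Chain' (fun x y => y ≤ x) a ∧ List.Chain' (· < ·) (a.getLast! :: b)

/-- The number of leading entries equal to `i` in a row. -/
def leadCount (i : ℕ) (l : List ℕ) : ℕ := (l.takeWhile (fun x => x == i)).length

/-- Dual large: `n` rows (top to bottom, row `k` from the top holding the letter
`n - k` in its leading run) and each leading run strictly longer than the next row. -/
def DualLarge (n : ℕ) (T : List (List ℕ)) : Prop :=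
  T.length = n ∧ ∀ i, 1 ≤ i → i ≤ n →
    (T.getD (n - i + 1) []).length < leadCount i (T.getD (n - i) [])

/-- Dual marginally large: each excess is exactly one. -/
def DualMarginallyLarge (n : ℕ) (T : List (List ℕ)) : Prop :=
  T.length = n ∧ ∀ i, 1 ≤ i → i ≤ n →
    leadCount i (T.getD (n - i) []) = (T.getD (n - i + 1) []).length + 1

/-- Pushing out a trivial column of height `h`: for each row `k < h`, remove one box
containing the letter `n - k` from the leading run of row `k`. -/
def PushStep (n : ℕ) (T T' : List (List ℕ)) : Prop :=
  ∃ h, 1 ≤ h ∧ h ≤ n ∧ (∀ k, k < h → (T.getD k []).headD 0 = n - k) ∧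
    T' = (List.range T.length).map
      (fun k => if k < h then (T.getD k []).tail else T.getD k [])

theorem leadCount_le_length (i : ℕ) (l : List ℕ) : leadCount i l ≤ l.length :=
  (List.takeWhile_prefix _).length_le

theorem leadCount_tail_add_one {i : ℕ} {l : List ℕ} (h : 0 < leadCount i l) :
    leadCount i l.tail + 1 = leadCount i l := by
  cases l with
  | nil => simp [leadCount] at h
  | cons a t =>
    by_cases hai : a = i
    · simp [leadCount, hai]
    · simp [leadCount, hai] at h

theorem headD_eq_of_leadCount_pos {i d : ℕ} {l : List ℕ} (h : 0 < leadCount i l) :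
    l.headD d = i := by
  cases l with
  | nil => simp [leadCount] at h
  | cons a t =>
    by_cases hai : a = i
    · simp [hai]
    · simp [leadCount, hai] at h

theorem replicate_leadCount_append_dropWhile (i : ℕ) (l : List ℕ) :
    List.replicate (leadCount i l) i ++ l.dropWhile (· == i) = l := by
  have hrun : l.takeWhile (· == i) = List.replicate (leadCount i l) i :=
    List.eq_replicate_of_mem fun b hb => by simpa using List.mem_takeWhile_imp hb
  rw [← hrun, List.takeWhile_append_dropWhile]

theorem dropWhile_tail_of_headD_eq {i : ℕ} {l : List ℕ} (hi : 0 < i) (h : l.headD 0 = i) :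
    l.tail.dropWhile (· == i) = l.dropWhile (· == i) := by
  cases l with
  | nil => simp at h; omega
  | cons a t => simp_all

def runTail (n : ℕ) (T : List (List ℕ)) (k : ℕ) : List ℕ :=
  (T.getD k []).dropWhile (· == n - k)

def pushColumn (h : ℕ) (T : List (List ℕ)) : List (List ℕ) :=
  (List.range T.length).map fun k => if k < h then (T.getD k []).tail else T.getD k []

theorem length_pushColumn (h : ℕ) (T : List (List ℕ)) : (pushColumn h T).length = T.length := by
  simp [pushColumn]

theorem getD_pushColumn (h : ℕ) (T : List (List ℕ)) (k : ℕ) :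
    (pushColumn h T).getD k [] = if k < h then (T.getD k []).tail else T.getD k [] := by
  by_cases hk : k < T.length
  · rw [pushColumn, List.getD_eq_getElem _ _ (by simpa using hk)]
    simp
  · rw [List.getD_eq_default _ _ (by simpa [length_pushColumn] using hk),
      List.getD_eq_default _ _ (by omega)]
    simp

def boxCount (T : List (List ℕ)) : ℕ :=
  ∑ k ∈ Finset.range T.length, (T.getD k []).length

theorem boxCount_pushColumn_lt {h : ℕ} {T : List (List ℕ)} (hh : 0 < h)
    (hrow : T.getD 0 [] ≠ []) :
    boxCount (pushColumn h T) < boxCount T := by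
  have hT : 0 < T.length := by
    by_contra h0
    exact hrow (List.getD_eq_default _ _ (by omega))
  rw [boxCount, boxCount, length_pushColumn]
  refine Finset.sum_lt_sum (fun k _ => ?_) ⟨0, Finset.mem_range.mpr hT, ?_⟩
  · rw [getD_pushColumn]
    split_ifs
    · exact (List.length_tail ▸ Nat.sub_le _ _)
    · exact le_rfl
  · rw [getD_pushColumn, if_pos hh, List.length_tail]
    have := List.length_pos_iff.mpr hrow
    omega

theorem forall_letter_iff_forall_row (n : ℕ) (P : ℕ → ℕ → Prop) :
    (∀ i, 1 ≤ i → i ≤ n → P i (n - i)) ↔ ∀ k < n, P (n - k) k := by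
  constructor
  · intro h k hk
    simpa [Nat.sub_sub_self hk.le] using h (n - k) (by omega) (by omega)
  · intro h i hi1 hin
    simpa [Nat.sub_sub_self hin] using h (n - i) (by omega)

theorem dualLarge_iff {n : ℕ} {T : List (List ℕ)} :
    DualLarge n T ↔ T.length = n ∧
      ∀ k < n, (T.getD (k + 1) []).length < leadCount (n - k) (T.getD k []) :=
  and_congr_right fun _ => forall_letter_iff_forall_row n
    fun i k => (T.getD (k + 1) []).length < leadCount i (T.getD k [])

theorem dualMarginallyLarge_iff {n : ℕ} {T : List (List ℕ)} :
    DualMarginallyLarge n T ↔ T.length = n ∧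
      ∀ k < n, leadCount (n - k) (T.getD k []) = (T.getD (k + 1) []).length + 1 :=
  and_congr_right fun _ => forall_letter_iff_forall_row n
    fun i k => leadCount i (T.getD k []) = (T.getD (k + 1) []).length + 1

theorem DualLarge.pushColumn_succ {n k : ℕ} {T : List (List ℕ)} (hT : DualLarge n T)
    (hk : k < n)
    (hexcess : (T.getD (k + 1) []).length + 1 < leadCount (n - k) (T.getD k [])) :
    DualLarge n (pushColumn (k + 1) T) := by
  obtain ⟨hlen, hlarge⟩ := dualLarge_iff.mp hT
  refine dualLarge_iff.mpr ⟨(length_pushColumn _ _).trans hlen, fun j hj => ?_⟩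
  rw [getD_pushColumn, getD_pushColumn]
  have hrun := leadCount_tail_add_one ((Nat.zero_le _).trans_lt (hlarge j hj))
  rcases lt_trichotomy j k with hjk | rfl | hkj
  · rw [if_pos (by omega : j < k + 1), if_pos (by omega : j + 1 < k + 1), List.length_tail]
    have hnext := (hlarge (j + 1) (by omega)).trans_le (leadCount_le_length _ _)
    have := hlarge j hj
    omega
  · rw [if_pos j.lt_succ_self, if_neg (lt_irrefl _)]
    omega
  · rw [if_neg (by omega : ¬ j < k + 1), if_neg (by omega : ¬ j + 1 < k + 1)]
    exact hlarge j hj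

theorem PushStep.runTail_eq {n : ℕ} {T T' : List (List ℕ)} (hstep : PushStep n T T') (k : ℕ) :
    runTail n T' k = runTail n T k := by
  obtain ⟨h, -, hhn, hhead, rfl⟩ := hstep
  change runTail n (pushColumn h T) k = _
  rw [runTail, runTail, getD_pushColumn]
  split_ifs with hkh
  · exact dropWhile_tail_of_headD_eq (by omega) (hhead k hkh)
  · rfl

theorem runTail_eq_of_reflTransGen {n : ℕ} {T T' : List (List ℕ)}
    (hreach : Relation.ReflTransGen (PushStep n) T T') (k : ℕ) :
    runTail n T' k = runTail n T k := by
  induction hreach with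
  | refl => rfl
  | tail _ hstep ih => exact (hstep.runTail_eq k).trans ih

theorem DualMarginallyLarge.getD_eq {n k : ℕ} {T : List (List ℕ)} (hT : DualMarginallyLarge n T)
    (hk : k < n) :
    T.getD k [] = List.replicate ((T.getD (k + 1) []).length + 1) (n - k) ++ runTail n T k := by
  rw [← (dualMarginallyLarge_iff.mp hT).2 k hk, runTail, replicate_leadCount_append_dropWhile]

theorem DualMarginallyLarge.getD_eq_getD_of_runTail_eq {n : ℕ} {X Y : List (List ℕ)}
    (hX : DualMarginallyLarge n X) (hY : DualMarginallyLarge n Y)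
    (hrun : ∀ k, runTail n X k = runTail n Y k) (k : ℕ) : X.getD k [] = Y.getD k [] :=
  if hk : k < n then by
    rw [hX.getD_eq hk, hY.getD_eq hk, hX.getD_eq_getD_of_runTail_eq hY hrun (k + 1), hrun k]
  else by
    rw [List.getD_eq_default _ _ (by rw [hX.1]; omega),
      List.getD_eq_default _ _ (by rw [hY.1]; omega)]
termination_by n - k

theorem DualMarginallyLarge.eq_of_runTail_eq {n : ℕ} {X Y : List (List ℕ)}
    (hX : DualMarginallyLarge n X) (hY : DualMarginallyLarge n Y)
    (hrun : ∀ k, runTail n X k = runTail n Y k) : X = Y := by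
  refine List.ext_getElem (hX.1.trans hY.1.symm) fun k hkX hkY => ?_
  rw [← List.getD_eq_getElem X [] hkX, ← List.getD_eq_getElem Y [] hkY]
  exact hX.getD_eq_getD_of_runTail_eq hY hrun k

theorem DualLarge.exists_pushStep_of_not_marginal {n : ℕ} {T : List (List ℕ)}
    (hT : DualLarge n T)
    (hnot : ¬ DualMarginallyLarge n T) :
    ∃ T', PushStep n T T' ∧ DualLarge n T' ∧ boxCount T' < boxCount T := by
  obtain ⟨hlen, hlarge⟩ := dualLarge_iff.mp hT
  obtain ⟨k, hk, hexcess⟩ : ∃ k < n,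
      (T.getD (k + 1) []).length + 1 < leadCount (n - k) (T.getD k []) := by
    by_contra! hall
    exact hnot (dualMarginallyLarge_iff.mpr ⟨hlen, fun j hj => by
      have := hlarge j hj; have := hall j hj; omega⟩)
  refine ⟨pushColumn (k + 1) T, ⟨k + 1, by omega, hk, fun j hj => ?_, rfl⟩,
    hT.pushColumn_succ hk hexcess, boxCount_pushColumn_lt k.succ_pos ?_⟩
  · exact headD_eq_of_leadCount_pos (by have := hlarge j (by omega); omega)
  · exact List.ne_nil_of_length_pos
      ((Nat.zero_le _).trans_lt ((hlarge 0 (by omega)).trans_le (leadCount_le_length _ _)))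

theorem DualLarge.exists_reflTransGen_marginal {n : ℕ} {T : List (List ℕ)}
    (hT : DualLarge n T) :
    ∃ TM, DualMarginallyLarge n TM ∧ Relation.ReflTransGen (PushStep n) T TM := by
  induction hsize : boxCount T using Nat.strong_induction_on generalizing T with
  | _ m ih =>
    by_cases hmarg : DualMarginallyLarge n T
    · exact ⟨T, hmarg, .refl⟩
    obtain ⟨T', hstep, hT', hlt⟩ := hT.exists_pushStep_of_not_marginal hmarg
    obtain ⟨TM, hTM, hreach⟩ := ih _ (hsize ▸ hlt) hT' rfl
    exact ⟨TM, hTM, .head hstep hreach⟩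

theorem stmt_13_general (n : ℕ) (T : List (List ℕ)) (hL : DualLarge n T) :
    ∃! TM : List (List ℕ),
      DualMarginallyLarge n TM ∧ Relation.ReflTransGen (PushStep n) T TM := by
  obtain ⟨TM, hTM, hreach⟩ := hL.exists_reflTransGen_marginal
  refine ⟨TM, ⟨hTM, hreach⟩, fun Y ⟨hY, hYreach⟩ => hY.eq_of_runTail_eq hTM fun k => ?_⟩
  rw [runTail_eq_of_reflTransGen hYreach, runTail_eq_of_reflTransGen hreach]

/-- From any dual large semistandard decomposition tableau, pushing out trivial
columns terminates at a unique dual marginally large tableau (the rewriting system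
is confluent with a unique normal form). -/
theorem stmt_13 (n : ℕ) (T : List (List ℕ)) (hL : DualLarge n T)
    (hhook : ∀ r ∈ T, IsHookWord r) :
    ∃! TM : List (List ℕ),
      DualMarginallyLarge n TM ∧ Relation.ReflTransGen (PushStep n) T TM :=
  stmt_13_general n T hL
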